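/- (Deterministic core of Theorem simReg: the confidence interval contains the optimum value.) If the confidence bounds are valid and x* ∈ X is a pure Nash equilibrium, then the region of interest ROI = {x ∈ X : LCB_f(x) ≤ min( min_{x' ∈ X} UCB_f(x'), 0 )} is nonempty and the optimal loss value f(x*) = 0 lies in the interval [ min_{x ∈ ROI} LCB_f(x), min_{x ∈ ROI} UCB_f(x) ]. -/

import Mathlib

/-- The partial maximum `max_{x'_i ∈ X_i} g(x'_i, x_{-i})`. -/
noncomputable def pmax {I : Type*} [DecidableEq I] {X : I → Type*}
    [∀ i, Fintype (X i)] [∀ i, Nonempty (X i)]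
    (g : (∀ j, X j) → ℝ) (i : I) (x : ∀ j, X j) : ℝ :=
  Finset.univ.sup' Finset.univ_nonempty (fun x' : X i => g (Function.update x i x'))

/-- Upper confidence bound for the loss:
`UCB_f(x) = Σ_i ( max_{x'_i} U_i(x'_i, x_{-i}) − L_i(x) )`. -/
noncomputable def UCBf {I : Type*} [Fintype I] [DecidableEq I] {X : I → Type*}
    [∀ i, Fintype (X i)] [∀ i, Nonempty (X i)]
    (U L : I → (∀ j, X j) → ℝ) (x : ∀ j, X j) : ℝ :=
  ∑ i, (pmax (U i) i x - L i x)

/-- Lower confidence bound for the loss: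
`LCB_f(x) = Σ_i ( max_{x'_i} L_i(x'_i, x_{-i}) − U_i(x) )`. -/
noncomputable def LCBf {I : Type*} [Fintype I] [DecidableEq I] {X : I → Type*}
    [∀ i, Fintype (X i)] [∀ i, Nonempty (X i)]
    (U L : I → (∀ j, X j) → ℝ) (x : ∀ j, X j) : ℝ :=
  ∑ i, (pmax (L i) i x - U i x)

/-- The loss function `f(x) = Σ_i ( max_{x'_i ∈ X_i} u_i(x'_i, x_{-i}) − u_i(x) )`. -/
noncomputable def loss {I : Type*} [Fintype I] [DecidableEq I] {X : I → Type*}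
    [∀ i, Fintype (X i)] [∀ i, Nonempty (X i)]
    (u : I → (∀ j, X j) → ℝ) (x : ∀ j, X j) : ℝ :=
  ∑ i, (pmax (u i) i x - u i x)


section Aux
variable {I : Type*} [Fintype I] [DecidableEq I] {X : I → Type*}
    [∀ i, Fintype (X i)] [∀ i, Nonempty (X i)]

lemma self_le_pmax (g : (∀ j, X j) → ℝ) (i : I) (x : ∀ j, X j) :
    g x ≤ pmax g i x := by
  have := Finset.le_sup' (f := fun x' : X i => g (Function.update x i x'))
    (b := x i) (Finset.mem_univ (x i))
  rw [pmax]
  simpa only [Function.update_eq_self] using this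

lemma pmax_mono {g h : (∀ j, X j) → ℝ} (hle : ∀ y, g y ≤ h y) (i : I) (x : ∀ j, X j) :
    pmax g i x ≤ pmax h i x := by
  rw [pmax, pmax]
  apply Finset.sup'_le
  intro b _
  exact le_trans (hle _) (Finset.le_sup' (fun x' : X i => h (Function.update x i x'))
    (Finset.mem_univ b))

lemma LCBf_le_loss (u U L : I → (∀ j, X j) → ℝ)
    (hvalid : ∀ (i : I) (x : ∀ j, X j), L i x ≤ u i x ∧ u i x ≤ U i x) (x : ∀ j, X j) :
    LCBf U L x ≤ loss u x := by
  apply Finset.sum_le_sum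
  intro i _
  exact sub_le_sub (pmax_mono (fun y => (hvalid i y).1) i x) (hvalid i x).2

lemma loss_le_UCBf (u U L : I → (∀ j, X j) → ℝ)
    (hvalid : ∀ (i : I) (x : ∀ j, X j), L i x ≤ u i x ∧ u i x ≤ U i x) (x : ∀ j, X j) :
    loss u x ≤ UCBf U L x := by
  apply Finset.sum_le_sum
  intro i _
  exact sub_le_sub (pmax_mono (fun y => (hvalid i y).2) i x) (hvalid i x).1

lemma loss_nonneg (u : I → (∀ j, X j) → ℝ) (x : ∀ j, X j) :
    0 ≤ loss u x := by
  apply Finset.sum_nonneg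
  intro i _
  exact sub_nonneg.2 (self_le_pmax (u i) i x)

end Aux

/-- Deterministic core of Theorem simReg: if the confidence bounds are valid and `x*` is
a pure Nash equilibrium, then the region of interest is nonempty and the optimal loss
value `f(x*) = 0` lies in the interval
`[ min_{x ∈ ROI} LCB_f(x), min_{x ∈ ROI} UCB_f(x) ]`. -/
theorem optimum_in_confidence_interval
    {I : Type*} [Fintype I] [Nonempty I] [DecidableEq I]
    {X : I → Type*} [∀ i, Fintype (X i)] [∀ i, Nonempty (X i)]
    (u U L : I → (∀ j, X j) → ℝ)
    (hvalid : ∀ (i : I) (x : ∀ j, X j), L i x ≤ u i x ∧ u i x ≤ U i x)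
    (xstar : ∀ j, X j)
    (hne : ∀ i : I, ∀ x' : X i, u i (Function.update xstar i x') ≤ u i xstar) :
    {x : ∀ j, X j |
        LCBf U L x ≤ min (Finset.univ.inf' Finset.univ_nonempty (UCBf U L)) 0}.Nonempty ∧
    loss u xstar = 0 ∧
    sInf (LCBf U L '' {x : ∀ j, X j |
        LCBf U L x ≤ min (Finset.univ.inf' Finset.univ_nonempty (UCBf U L)) 0})
      ≤ loss u xstar ∧
    loss u xstar ≤
      sInf (UCBf U L '' {x : ∀ j, X j |
        LCBf U L x ≤ min (Finset.univ.inf' Finset.univ_nonempty (UCBf U L)) 0}) := by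
  have hloss0 : loss u xstar = 0 := by
    apply Finset.sum_eq_zero
    intro i _
    have h1 : pmax (u i) i xstar ≤ u i xstar := Finset.sup'_le _ _ (fun b _ => hne i b)
    have h2 := self_le_pmax (u i) i xstar
    have : pmax (u i) i xstar = u i xstar := le_antisymm h1 h2
    simp [this]
  set S := {x : ∀ j, X j |
      LCBf U L x ≤ min (Finset.univ.inf' Finset.univ_nonempty (UCBf U L)) 0} with hS
  have hxstar : xstar ∈ S := by
    have h1 : LCBf U L xstar ≤ 0 := by
      have := LCBf_le_loss u U L hvalid xstar
      linarith [hloss0]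
    have h2 : LCBf U L xstar ≤ Finset.univ.inf' Finset.univ_nonempty (UCBf U L) := by
      apply Finset.le_inf'
      intro b _
      calc LCBf U L xstar ≤ 0 := h1
        _ ≤ loss u b := loss_nonneg u b
        _ ≤ UCBf U L b := loss_le_UCBf u U L hvalid b
    exact le_min h2 h1
  have hSne : S.Nonempty := ⟨xstar, hxstar⟩
  refine ⟨hSne, hloss0, ?_, ?_⟩
  · have hfin : (LCBf U L '' S).Finite := (Set.toFinite S).image _
    have : sInf (LCBf U L '' S) ≤ LCBf U L xstar :=
      csInf_le hfin.bddBelow ⟨xstar, hxstar, rfl⟩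
    have h1 : LCBf U L xstar ≤ loss u xstar := LCBf_le_loss u U L hvalid xstar
    linarith
  · have hne' : (UCBf U L '' S).Nonempty := ⟨UCBf U L xstar, xstar, hxstar, rfl⟩
    apply le_csInf hne'
    rintro b ⟨y, hy, rfl⟩
    calc loss u xstar = 0 := hloss0
      _ ≤ loss u y := loss_nonneg u y
      _ ≤ UCBf U L y := loss_le_UCBf u U L hvalid y
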